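/- Let F be a free group with basis {g_j | j ∈ J}, K ⊆ J, F_K the subgroup generated by {g_j | j ∈ K}, N a normal subgroup of F, and suppose v ∈ F satisfies D_k(v) ≡ 0 mod ℤ[F]·(N−1) for every k ∈ J \ K. Then v and 1 lie in the same right coset of the subgroup F_K·N, i.e., there exists v̂ ∈ F_K with v·v̂⁻¹ ∈ N. -/

import Mathlib

/-
Put `H = F_K ⊔ N` and let `χ : ℤ[F] → ℤ` add up the coefficients of the elements of `H`.
Since `H` is a subgroup, `χ(h x) = χ(x) = χ(x h)` for `h ∈ H`, so `χ` kills `(g_k − 1)·ℤ[F]` for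
`k ∈ K` and the left ideal `ℤ[F]·(N − 1)`. Applying `χ` to the fundamental formula
`v − 1 = Σ_j (g_j − 1) D_j(v)` gives `χ(v) = χ(1) = 1`, i.e. `v ∈ H = F_K·N`.
-/

open scoped Classical

/-- The augmentation map `ℤ[F] → ℤ` induced by the trivial homomorphism `F → 1`. -/
noncomputable def aug (J : Type) : MonoidAlgebra ℤ (FreeGroup J) →ₐ[ℤ] ℤ :=
  MonoidAlgebra.lift ℤ ℤ (FreeGroup J) 1

/-- `D` is the Fox derivative of `ℤ[F]` with respect to the generator `g_k`:
it is ℤ-linear, satisfies `D(uv) = D(u)v + ε(u)D(v)`, and sends `g_j` to `δ_{kj}`. -/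
def IsFoxDerivative {J : Type} (k : J)
    (D : MonoidAlgebra ℤ (FreeGroup J) →ₗ[ℤ] MonoidAlgebra ℤ (FreeGroup J)) : Prop :=
  (∀ u v : MonoidAlgebra ℤ (FreeGroup J), D (u * v) = D u * v + (aug J u) • D v) ∧
  (∀ j : J, D (MonoidAlgebra.of ℤ (FreeGroup J) (FreeGroup.of j)) = if k = j then 1 else 0)

/-- The ideal `ℤ[F]·(N−1)` of `ℤ[F]` generated by the elements `n − 1`, `n ∈ N`. -/
noncomputable def NIdeal {J : Type} (N : Subgroup (FreeGroup J)) :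
    Submodule ℤ (MonoidAlgebra ℤ (FreeGroup J)) :=
  Submodule.span ℤ {a | ∃ u : MonoidAlgebra ℤ (FreeGroup J), ∃ n ∈ N,
    a = u * (MonoidAlgebra.of ℤ (FreeGroup J) n - 1)}

/-- The ideal `d·ℤ[F]` of multiples of the integer `d`. -/
noncomputable def dIdeal {J : Type} (d : ℤ) : Submodule ℤ (MonoidAlgebra ℤ (FreeGroup J)) :=
  Submodule.span ℤ {a | ∃ u : MonoidAlgebra ℤ (FreeGroup J), a = d • u}

open MonoidAlgebra Filter

section CoeffSumOn

variable {G : Type*} [Group G] (H : Subgroup G)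

noncomputable def coeffSumOn : MonoidAlgebra ℤ G →+ ℤ :=
  liftNC (AddMonoidHom.id ℤ) (Set.indicator H 1)

variable {H}

lemma coeffSumOn_of (g : G) :
    coeffSumOn H (of ℤ G g) = if g ∈ H then 1 else 0 := by
  simp [coeffSumOn, Set.indicator_apply]

lemma coeffSumOn_of_mul {h : G} (hh : h ∈ H) (x : MonoidAlgebra ℤ G) :
    coeffSumOn H (of ℤ G h * x) = coeffSumOn H x := by
  induction x using MonoidAlgebra.induction_on with
  | of g => rw [← map_mul, coeffSumOn_of, coeffSumOn_of, H.mul_mem_cancel_left hh]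
  | add x y hx hy => rw [mul_add, map_add, map_add, hx, hy]
  | smul r x hx => rw [mul_smul_comm, map_zsmul, map_zsmul, hx]

lemma coeffSumOn_mul_of {h : G} (hh : h ∈ H) (x : MonoidAlgebra ℤ G) :
    coeffSumOn H (x * of ℤ G h) = coeffSumOn H x := by
  induction x using MonoidAlgebra.induction_on with
  | of g => rw [← map_mul, coeffSumOn_of, coeffSumOn_of, H.mul_mem_cancel_right hh]
  | add x y hx hy => rw [add_mul, map_add, map_add, hx, hy]
  | smul r x hx => rw [smul_mul_assoc, map_zsmul, map_zsmul, hx]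

lemma coeffSumOn_of_sub_one_mul {h : G} (hh : h ∈ H) (x : MonoidAlgebra ℤ G) :
    coeffSumOn H ((of ℤ G h - 1) * x) = 0 := by
  rw [sub_mul, one_mul, map_sub, coeffSumOn_of_mul hh, sub_self]

lemma coeffSumOn_mul_of_sub_one {h : G} (hh : h ∈ H) (x : MonoidAlgebra ℤ G) :
    coeffSumOn H (x * (of ℤ G h - 1)) = 0 := by
  rw [mul_sub, mul_one, map_sub, coeffSumOn_mul_of hh, sub_self]

lemma mem_of_coeffSumOn_of_sub_one_eq_zero {g : G}
    (hg : coeffSumOn H (of ℤ G g - 1) = 0) : g ∈ H := by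
  rw [map_sub, sub_eq_zero, ← map_one (of ℤ G), coeffSumOn_of, coeffSumOn_of] at hg
  simpa [H.one_mem] using hg

end CoeffSumOn

section NIdeal

variable {J : Type} {N : Subgroup (FreeGroup J)}

lemma NIdeal.mul_mem_left (r : MonoidAlgebra ℤ (FreeGroup J))
    {x : MonoidAlgebra ℤ (FreeGroup J)} (hx : x ∈ NIdeal N) : r * x ∈ NIdeal N := by
  induction hx using Submodule.span_induction with
  | mem a ha =>
    obtain ⟨u, n, hn, rfl⟩ := ha
    exact Submodule.subset_span ⟨r * u, n, hn, by rw [mul_assoc]⟩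
  | zero => rw [mul_zero]; exact Submodule.zero_mem _
  | add a b _ _ ha hb => rw [mul_add]; exact Submodule.add_mem _ ha hb
  | smul c a _ ha => rw [mul_smul_comm]; exact Submodule.smul_mem _ c ha

lemma coeffSumOn_eq_zero_of_mem_NIdeal {H : Subgroup (FreeGroup J)} (hNH : N ≤ H)
    {x : MonoidAlgebra ℤ (FreeGroup J)} (hx : x ∈ NIdeal N) : coeffSumOn H x = 0 := by
  induction hx using Submodule.span_induction with
  | mem a ha =>
    obtain ⟨u, n, hn, rfl⟩ := ha
    exact coeffSumOn_mul_of_sub_one (hNH hn) u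
  | zero => exact map_zero _
  | add a b _ _ ha hb => rw [map_add, ha, hb, add_zero]
  | smul c a _ ha => rw [map_zsmul, ha, smul_zero]

end NIdeal

namespace IsFoxDerivative

variable {J : Type} {k : J}
  {D : MonoidAlgebra ℤ (FreeGroup J) →ₗ[ℤ] MonoidAlgebra ℤ (FreeGroup J)}

lemma map_one (hD : IsFoxDerivative k D) : D 1 = 0 := by
  simpa using hD.1 1 1

lemma map_of_mul (hD : IsFoxDerivative k D) (x y : FreeGroup J) :
    D (of ℤ _ (x * y)) = D (of ℤ _ x) * of ℤ _ y + D (of ℤ _ y) := by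
  rw [map_mul, hD.1]
  simp [aug]

lemma map_of_inv (hD : IsFoxDerivative k D) (x : FreeGroup J) :
    D (of ℤ _ x⁻¹) = -(D (of ℤ _ x) * of ℤ _ x⁻¹) := by
  have h := hD.map_of_mul x x⁻¹
  rw [mul_inv_cancel, _root_.map_one, hD.map_one] at h
  exact eq_neg_of_add_eq_zero_right h.symm

end IsFoxDerivative

/-- Stating the formula for all large enough finite `s` absorbs the bookkeeping of the finite
support of `j ↦ D_j(w)`. -/
theorem eventually_fox_fundamental_formula {J : Type}
    {D : J → (MonoidAlgebra ℤ (FreeGroup J) →ₗ[ℤ] MonoidAlgebra ℤ (FreeGroup J))}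
    (hD : ∀ j, IsFoxDerivative j (D j)) (w : FreeGroup J) :
    ∀ᶠ s : Finset J in atTop, of ℤ _ w - 1 =
      ∑ j ∈ s, (of ℤ _ (FreeGroup.of j) - 1) * D j (of ℤ _ w) := by
  induction w using FreeGroup.induction_on with
  | C1 =>
    refine .of_forall fun s => ?_
    rw [_root_.map_one, sub_self, eq_comm]
    exact Finset.sum_eq_zero fun j _ => by rw [(hD j).map_one, mul_zero]
  | of x =>
    filter_upwards [eventually_ge_atTop {x}] with s hs
    simp_rw [(hD _).2 x, mul_ite, mul_one, mul_zero, Finset.sum_ite_eq',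
      if_pos (Finset.singleton_subset_iff.mp hs)]
  | inv_of x hx =>
    filter_upwards [hx] with s hs
    calc of ℤ _ (FreeGroup.of x)⁻¹ - 1
        _ = -((of ℤ _ (FreeGroup.of x) - 1) * of ℤ _ (FreeGroup.of x)⁻¹) := by
          rw [sub_mul, ← map_mul, mul_inv_cancel, _root_.map_one, one_mul, neg_sub]
        _ = _ := by
          simp_rw [hs, Finset.sum_mul, ← Finset.sum_neg_distrib, (hD _).map_of_inv, mul_neg,
            mul_assoc]
  | mul x y hx hy =>
    filter_upwards [hx, hy] with s hsx hsy
    calc of ℤ _ (x * y) - 1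
        _ = (of ℤ _ x - 1) * of ℤ _ y + (of ℤ _ y - 1) := by
          rw [map_mul, sub_mul, one_mul, sub_add_sub_cancel]
        _ = _ := by
          simp_rw [hsx, hsy, Finset.sum_mul, ← Finset.sum_add_distrib, (hD _).map_of_mul, mul_add,
            mul_assoc]

/-- If `D_k(v) ≡ 0 mod ℤ[F]·(N−1)` for all `k ∈ J \ K`, then `v` and `1` lie in the same
right coset of `F_K·N`: there is `v̂ ∈ F_K` with `v·v̂⁻¹ ∈ N`. -/
theorem coset_of_fox_congruence {J : Type} (K : Set J) (N : Subgroup (FreeGroup J))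
    (hN : N.Normal)
    (D : J → (MonoidAlgebra ℤ (FreeGroup J) →ₗ[ℤ] MonoidAlgebra ℤ (FreeGroup J)))
    (hD : ∀ j, IsFoxDerivative j (D j)) (v : FreeGroup J)
    (hv : ∀ k, k ∉ K → D k (MonoidAlgebra.of ℤ (FreeGroup J) v) ∈ NIdeal N) :
    ∃ vhat ∈ Subgroup.closure (FreeGroup.of '' K), v * vhat⁻¹ ∈ N := by
  set H := Subgroup.closure (FreeGroup.of '' K) ⊔ N
  obtain ⟨s, hs⟩ := (eventually_fox_fundamental_formula hD v).exists
  have hvH : v ∈ H := by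
    refine mem_of_coeffSumOn_of_sub_one_eq_zero ?_
    rw [hs, map_sum]
    refine Finset.sum_eq_zero fun j _ => ?_
    by_cases hj : j ∈ K
    · exact coeffSumOn_of_sub_one_mul
        (Subgroup.mem_sup_left (Subgroup.subset_closure (Set.mem_image_of_mem _ hj))) _
    · exact coeffSumOn_eq_zero_of_mem_NIdeal le_sup_right (NIdeal.mul_mem_left _ (hv j hj))
  obtain ⟨vhat, hvhat, n, hn, rfl⟩ := Subgroup.mem_sup_of_normal_right.mp hvH
  exact ⟨vhat, hvhat, by simpa [mul_assoc] using hN.conj_mem n hn vhat⟩
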